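/- The row-insertion shape datum for binary matrices is a bijection. Let μ, ν be partitions such that there exists at least one partition λ₀ with λ₀ ≤ᵥ μ and λ₀ ≤ₕ ν. Let t₀ be the element of T(μ,ν) with minimal first coordinate, and let φ : S(μ,ν) → T(μ,ν) send each s = (i,j) to the element of T(μ,ν) with minimal first coordinate among those whose first coordinate exceeds i. Then for every partition λ with λ ≤ᵥ μ and λ ≤ₕ ν and every b ∈ {0,1}, the set cells(μ) ∪ cells(ν) ∪ {φ(s) : s ∈ S(μ,ν) \ cells(λ)} ∪ (if b = 1 then {t₀} else ∅) is the cell set of a (unique) partition κ, which satisfies μ ≤ₕ κ and ν ≤ᵥ κ; and the resulting map (λ, b) ↦ κ is a bijection from {(λ, b) : λ a partition with λ ≤ᵥ μ and λ ≤ₕ ν, b ∈ {0,1}} onto {κ : κ a partition with μ ≤ₕ κ and ν ≤ᵥ κ}. -/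
import Mathlib


/-- A partition: weakly decreasing function `ℕ → ℕ` that is eventually zero. -/
def IsPartition (f : ℕ → ℕ) : Prop :=
  (∀ i, f (i + 1) ≤ f i) ∧ ∃ N, ∀ i, N ≤ i → f i = 0

/-- The size `|f|` of an eventually-zero function, as a finite sum. -/
noncomputable def psize (f : ℕ → ℕ) : ℕ := ∑ᶠ i, f i

/-- `HStrip a b` means `b/a` is a horizontal strip (written `a ≤ₕ b`). -/
def HStrip (a b : ℕ → ℕ) : Prop := ∀ i, a i ≤ b i ∧ b (i + 1) ≤ a i

/-- `VStrip a b` means `b/a` is a vertical strip (written `a ≤ᵥ b`). -/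
def VStrip (a b : ℕ → ℕ) : Prop := ∀ i, a i ≤ b i ∧ b i ≤ a i + 1

/-- The Young diagram (cell set) of a partition. -/
def cells (f : ℕ → ℕ) : Set (ℕ × ℕ) := {p | p.2 < f p.1}

/-- The transpose partition. -/
noncomputable def ptranspose (f : ℕ → ℕ) : ℕ → ℕ := fun j => {i : ℕ | j < f i}.ncard

/-- The set `S(μ,ν)` of optional squares for the intermediate shape. -/
def Sset (mu nu : ℕ → ℕ) : Set (ℕ × ℕ) :=
  {p | mu p.1 = p.2 + 1 ∧ ptranspose nu p.2 = p.1 + 1}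

/-- The set `T(μ,ν)` of optional squares for the resulting shape. -/
def Tset (mu nu : ℕ → ℕ) : Set (ℕ × ℕ) :=
  {p | ptranspose mu p.2 = p.1 ∧ nu p.1 = p.2}

/-- The Burge relations for `(λ, μ, ν, m)` satisfied by a pair `(κ, c)`,
with the convention `c (-1) = 0`. -/
def BurgeRel (lam mu nu : ℕ → ℕ) (m : ℕ) (kap c : ℕ → ℕ) : Prop :=
  (c 0 + mu 0 + nu 0 = lam 0 + kap 0) ∧
  (∀ i, c (i + 1) + mu (i + 1) + nu (i + 1) = lam (i + 1) + kap (i + 1) + c i) ∧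
  (∀ i, kap (i + 1) ≤ lam i) ∧
  (∀ i, 0 < c i → kap (i + 1) = lam i) ∧
  (∃ N, ∀ i, N ≤ i → c i = m)

/-- Row `i` contains a square of `S(μ,ν)`. -/
def Srow (mu nu : ℕ → ℕ) (i : ℕ) : Prop := nu (i+1) < mu i ∧ mu i ≤ nu i

/-- Row `i` contains a square of `T(μ,ν)`. -/
def Trow (mu nu : ℕ → ℕ) (i : ℕ) : Prop := mu i ≤ nu i ∧ ∀ m < i, nu i < mu m

lemma cells_inj {f g : ℕ → ℕ} (h : cells f = cells g) : f = g := by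
  funext i
  have h' : ∀ j, j < f i ↔ j < g i := fun j => by
    simpa [cells] using Set.ext_iff.mp h (i, j)
  have a : ¬ g i < f i := fun hc => lt_irrefl _ ((h' (g i)).mp hc)
  have b : ¬ f i < g i := fun hc => lt_irrefl _ ((h' (f i)).mpr hc)
  omega

lemma ptranspose_eq {f : ℕ → ℕ} (hf : ∀ i, f (i+1) ≤ f i) {j k : ℕ}
    (h1 : f k ≤ j) (h2 : ∀ m < k, j < f m) : ptranspose f j = k := by
  have ha : Antitone f := antitone_nat_of_succ_le hf
  have hs : {i : ℕ | j < f i} = Set.Iio k := by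
    ext i
    simp only [Set.mem_setOf_eq, Set.mem_Iio]
    constructor
    · intro h
      by_contra hk
      push_neg at hk
      exact absurd (lt_of_lt_of_le h (ha hk)) (not_lt.2 h1)
    · exact h2 i
  rw [ptranspose]
  rw [hs, ← Finset.coe_Iio, Set.ncard_coe_finset, Nat.card_Iio]

lemma ptranspose_eq_iff {f : ℕ → ℕ} (hf : IsPartition f) {j k : ℕ} :
    ptranspose f j = k ↔ f k ≤ j ∧ ∀ m < k, j < f m := by
  constructor
  · intro h
    obtain ⟨N, hN⟩ := hf.2
    have hex : ∃ m, f m ≤ j := ⟨N, by rw [hN N le_rfl]; exact Nat.zero_le j⟩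
    set k0 := Nat.find hex with hk0
    have h1 : f k0 ≤ j := Nat.find_spec hex
    have h2 : ∀ m < k0, j < f m := fun m hm => lt_of_not_ge (Nat.find_min hex hm)
    have := ptranspose_eq hf.1 h1 h2
    rw [h] at this
    subst this
    exact ⟨h1, h2⟩
  · intro ⟨h1, h2⟩
    exact ptranspose_eq hf.1 h1 h2

lemma mem_Sset_iff {mu nu : ℕ → ℕ} (hnu : IsPartition nu) {p : ℕ × ℕ} :
    p ∈ Sset mu nu ↔ Srow mu nu p.1 ∧ p.2 + 1 = mu p.1 := by
  have ha : Antitone nu := antitone_nat_of_succ_le hnu.1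
  constructor
  · rintro ⟨h1, h2⟩
    rw [ptranspose_eq_iff hnu] at h2
    refine ⟨⟨?_, ?_⟩, h1.symm⟩
    · have := h2.1
      omega
    · have := h2.2 p.1 (Nat.lt_succ_self _)
      omega
  · rintro ⟨⟨hs1, hs2⟩, hp2⟩
    refine ⟨hp2.symm, (ptranspose_eq_iff hnu).mpr ⟨by omega, ?_⟩⟩
    intro m hm
    have : nu p.1 ≤ nu m := ha (by omega)
    omega

lemma mem_Tset_iff {mu nu : ℕ → ℕ} (hmu : IsPartition mu) {p : ℕ × ℕ} :
    p ∈ Tset mu nu ↔ Trow mu nu p.1 ∧ p.2 = nu p.1 := by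
  constructor
  · rintro ⟨h1, h2⟩
    rw [ptranspose_eq_iff hmu] at h1
    exact ⟨⟨h2 ▸ h1.1, fun m hm => h2 ▸ h1.2 m hm⟩, h2.symm⟩
  · rintro ⟨⟨ht1, ht2⟩, hp2⟩
    exact ⟨(ptranspose_eq_iff hmu).mpr ⟨hp2 ▸ ht1, fun m hm => hp2 ▸ ht2 m hm⟩, hp2.symm⟩

/-- If row `i` of `ν` is at least as long as row `i` of `μ`, there is a `T`-row at or below `i`. -/
lemma exists_trow_le {mu nu : ℕ → ℕ} (hmu : IsPartition mu) (hnu : IsPartition nu) :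
    ∀ i, mu i ≤ nu i → ∃ k, k ≤ i ∧ Trow mu nu k := by
  intro i
  induction i using Nat.strong_induction_on with
  | _ i ih =>
    intro hA
    by_cases h : ∀ m < i, nu i < mu m
    · exact ⟨i, le_rfl, hA, h⟩
    · push_neg at h
      obtain ⟨m, hm, hmle⟩ := h
      have hAm : mu m ≤ nu m := le_trans hmle (antitone_nat_of_succ_le hnu.1 (le_of_lt hm))
      obtain ⟨k, hk, hT⟩ := ih m hm hAm
      exact ⟨k, le_trans hk (le_of_lt hm), hT⟩

/-- Between an `S`-row and a later row where `μ ≤ ν`, there is a `T`-row. -/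
lemma exists_trow_between {mu nu : ℕ → ℕ} (hmu : IsPartition mu) (hnu : IsPartition nu)
    {i : ℕ} (hs : Srow mu nu i) :
    ∀ i', i < i' → mu i' ≤ nu i' → ∃ k, i < k ∧ k ≤ i' ∧ Trow mu nu k := by
  intro i'
  induction i' using Nat.strong_induction_on with
  | _ i' ih =>
    intro hii' hA
    by_cases h : ∀ m, i < m → m < i' → nu i' < mu m
    · refine ⟨i', hii', le_rfl, hA, ?_⟩
      intro m hm
      rcases Nat.lt_or_ge i m with h1 | h1
      · exact h m h1 hm
      · -- m ≤ i : mu m ≥ mu i > nu (i+1) ≥ nu i'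
        have h2 : mu i ≤ mu m := antitone_nat_of_succ_le hmu.1 h1
        have h3 : nu i' ≤ nu (i+1) := antitone_nat_of_succ_le hnu.1 hii'
        have := hs.1
        omega
    · push_neg at h
      obtain ⟨m, him, hmi', hmle⟩ := h
      have hAm : mu m ≤ nu m := le_trans hmle (antitone_nat_of_succ_le hnu.1 (le_of_lt hmi'))
      obtain ⟨k, hk1, hk2, hT⟩ := ih m hmi' him hAm
      exact ⟨k, hk1, le_trans hk2 (le_of_lt hmi'), hT⟩

/-- Below any non-minimal `T`-row there is an `S`-row with no `T`-row in between. -/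
lemma exists_srow_below {mu nu : ℕ → ℕ} (hmu : IsPartition mu) (hnu : IsPartition nu)
    {p j : ℕ} (hp : Trow mu nu p) (hj : Trow mu nu j) (hpj : p < j) :
    ∃ i, i < j ∧ Srow mu nu i ∧ ∀ m, i < m → m < j → ¬ Trow mu nu m := by
  -- downward strong induction
  have key : ∀ i, p ≤ i → i < j → nu (i+1) < mu i → (∀ m, i < m → m < j → ¬ Trow mu nu m) →
      ∃ i', i' < j ∧ Srow mu nu i' ∧ ∀ m, i' < m → m < j → ¬ Trow mu nu m := by
    intro i
    induction i using Nat.strong_induction_on with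
    | _ i ih =>
      intro hpi hij hC hnoT
      by_cases hA : mu i ≤ nu i
      · exact ⟨i, hij, ⟨hC, hA⟩, hnoT⟩
      · have hip : p ≠ i := by
          rintro rfl
          exact hA hp.1
        have hpi' : p ≤ i - 1 := by omega
        have hi1 : 1 ≤ i := by omega
        have hC' : nu (i - 1 + 1) < mu (i - 1) := by
          have h1 : mu i ≤ mu (i-1) := antitone_nat_of_succ_le hmu.1 (by omega)
          have h2 : i - 1 + 1 = i := by omega
          rw [h2]
          omega
        have hnoT' : ∀ m, i - 1 < m → m < j → ¬ Trow mu nu m := by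
          intro m h1 h2 hT
          rcases Nat.lt_or_ge i m with h3 | h3
          · exact hnoT m h3 h2 hT
          · have : m = i := by omega
            subst this
            exact hA hT.1
        exact ih (i-1) (by omega) hpi' (by omega) hC' hnoT'
  have hj1 : 1 ≤ j := by omega
  have hC : nu (j - 1 + 1) < mu (j - 1) := by
    have h2 : j - 1 + 1 = j := by omega
    rw [h2]
    exact hj.2 (j-1) (by omega)
  exact key (j-1) (by omega) (by omega) hC (by intro m h1 h2; omega)


set_option maxHeartbeats 1000000 in
theorem binary_row_insertion_shape_datum_bijective (mu nu : ℕ → ℕ)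
    (hmu : IsPartition mu) (hnu : IsPartition nu)
    (hex : ∃ lam0, IsPartition lam0 ∧ VStrip lam0 mu ∧ HStrip lam0 nu)
    (t0 : ℕ × ℕ) (ht0T : t0 ∈ Tset mu nu) (ht0min : ∀ t ∈ Tset mu nu, t0.1 ≤ t.1)
    (φ : (ℕ × ℕ) → (ℕ × ℕ))
    (hφ : ∀ s ∈ Sset mu nu, φ s ∈ Tset mu nu ∧ s.1 < (φ s).1 ∧
      ∀ t ∈ Tset mu nu, s.1 < t.1 → (φ s).1 ≤ t.1) :
    (∀ lam, IsPartition lam → VStrip lam mu → HStrip lam nu → ∀ b : Bool,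
      (∃! kap : ℕ → ℕ, IsPartition kap ∧
        cells kap = cells mu ∪ cells nu ∪ (φ '' (Sset mu nu \ cells lam)) ∪
          (if b then {t0} else (∅ : Set (ℕ × ℕ)))) ∧
      (∀ kap : ℕ → ℕ, IsPartition kap →
        cells kap = cells mu ∪ cells nu ∪ (φ '' (Sset mu nu \ cells lam)) ∪
          (if b then {t0} else (∅ : Set (ℕ × ℕ))) →
        HStrip mu kap ∧ VStrip nu kap)) ∧
    ∃ F : ((ℕ → ℕ) × Bool) → (ℕ → ℕ),
      (∀ lam b, IsPartition lam → VStrip lam mu → HStrip lam nu →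
        cells (F (lam, b)) = cells mu ∪ cells nu ∪ (φ '' (Sset mu nu \ cells lam)) ∪
          (if b then {t0} else (∅ : Set (ℕ × ℕ)))) ∧
      Set.BijOn F
        {p : (ℕ → ℕ) × Bool | IsPartition p.1 ∧ VStrip p.1 mu ∧ HStrip p.1 nu}
        {kap : ℕ → ℕ | IsPartition kap ∧ HStrip mu kap ∧ VStrip nu kap} := by
  classical
  obtain ⟨lam0, hl0p, hl0v, hl0h⟩ := hex
  have hE1 : ∀ i, nu (i+1) ≤ mu i := fun i => le_trans (hl0h i).2 (hl0v i).1
  have hE2 : ∀ i, mu i ≤ nu i + 1 := fun i =>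
    le_trans (hl0v i).2 (Nat.succ_le_succ (hl0h i).1)
  have hmuA : Antitone mu := antitone_nat_of_succ_le hmu.1
  have hnuA : Antitone nu := antitone_nat_of_succ_le hnu.1
  have ht0r : Trow mu nu t0.1 ∧ t0.2 = nu t0.1 := (mem_Tset_iff hmu).mp ht0T
  have ht0m : ∀ k, Trow mu nu k → t0.1 ≤ k := fun k hk =>
    ht0min (k, nu k) ((mem_Tset_iff hmu).mpr ⟨hk, rfl⟩)
  have hSm : ∀ i, Srow mu nu i → (i, mu i - 1) ∈ Sset mu nu := fun i hi =>
    (mem_Sset_iff hnu).mpr ⟨hi, by have := hi.1; simp; omega⟩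
  set ψ : ℕ → ℕ := fun i => (φ (i, mu i - 1)).1 with hψdef
  have hφ' : ∀ i, Srow mu nu i → Trow mu nu (ψ i) ∧ (φ (i, mu i - 1)).2 = nu (ψ i) ∧
      i < ψ i ∧ ∀ k, Trow mu nu k → i < k → ψ i ≤ k := by
    intro i hi
    obtain ⟨hT, hlt, hmin⟩ := hφ _ (hSm i hi)
    have h2 := (mem_Tset_iff hmu).mp hT
    exact ⟨h2.1, h2.2, hlt, fun k hk hik =>
      hmin (k, nu k) ((mem_Tset_iff hmu).mpr ⟨hk, rfl⟩) hik⟩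
  have hSge : ∀ i, Srow mu nu i → t0.1 ≤ i := by
    intro i hi
    obtain ⟨k, hk, hT⟩ := exists_trow_le hmu hnu i hi.2
    exact le_trans (ht0m k hT) hk
  have hψne : ∀ i, Srow mu nu i → ψ i ≠ t0.1 := by
    intro i hi h
    have h1 := (hφ' i hi).2.2.1
    have h2 := hSge i hi
    omega
  have hψmono : ∀ i i', Srow mu nu i → Srow mu nu i' → i < i' → ψ i < ψ i' := by
    intro i i' hi hi' hlt
    obtain ⟨k, h1, h2, hT⟩ := exists_trow_between hmu hnu hi i' hlt hi'.2
    have h3 := (hφ' i hi).2.2.2 k hT h1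
    have h4 := (hφ' i' hi').2.2.1
    omega
  have hψinj : ∀ i i', Srow mu nu i → Srow mu nu i' → ψ i = ψ i' → i = i' := by
    intro i i' hi hi' he
    rcases lt_trichotomy i i' with h | h | h
    · exact absurd he (Nat.ne_of_lt (hψmono i i' hi hi' h))
    · exact h
    · exact absurd he.symm (Nat.ne_of_lt (hψmono i' i hi' hi h))
  set M : ℕ → ℕ := fun i => max (mu i) (nu i) with hMdef
  set Inc : (ℕ → ℕ) → Bool → ℕ → Prop := fun lam b i =>
    (b = true ∧ i = t0.1) ∨ ∃ r, Srow mu nu r ∧ lam r < mu r ∧ ψ r = i with hIncdef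
  set F : ((ℕ → ℕ) × Bool) → (ℕ → ℕ) :=
    fun p i => M i + (if Inc p.1 p.2 i then 1 else 0) with hFdef
  have hFi : ∀ lam b i, F (lam, b) i = M i + (if Inc lam b i then 1 else 0) :=
    fun lam b i => rfl
  have hIncT : ∀ lam b i, Inc lam b i → Trow mu nu i := by
    intro lam b i h
    rw [hIncdef] at h
    rcases h with ⟨_, rfl⟩ | ⟨r, hr, _, rfl⟩
    · exact ht0r.1
    · exact (hφ' r hr).1
  -- the cells computation
  have hcells : ∀ lam b, (∀ i, lam i ≤ mu i) →
      cells (F (lam, b)) = cells mu ∪ cells nu ∪ (φ '' (Sset mu nu \ cells lam)) ∪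
        (if b then {t0} else (∅ : Set (ℕ × ℕ))) := by
    intro lam b hlm
    ext ⟨i, j⟩
    simp only [cells, Set.mem_union, Set.mem_setOf_eq, Set.mem_image, Set.mem_diff]
    constructor
    · intro h
      rw [hFi] at h
      by_cases hj : j < M i
      · left; left
        rw [hMdef] at hj
        simp only [lt_max_iff] at hj
        exact hj
      · have hInd : Inc lam b i := by
          by_contra hc
          rw [if_neg hc] at h
          omega
        have hj' : j = M i := by
          rw [if_pos hInd] at h
          omega
        have hTi : Trow mu nu i := hIncT lam b i hInd
        have hMn : M i = nu i := max_eq_right hTi.1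
        rw [hIncdef] at hInd
        rcases hInd with ⟨hb, hit⟩ | ⟨r, hr, hlr, hri⟩
        · right
          have ht : ((i, j) : ℕ × ℕ) = t0 := by
            have : j = t0.2 := by rw [hj', hit, ht0r.2]; rw [hit] at hMn; exact hMn
            rw [this, hit]
          rw [ht, hb]
          simp
        · left; right
          refine ⟨(r, mu r - 1), ⟨hSm r hr, ?_⟩, ?_⟩
          · intro hc
            simp only [cells, Set.mem_setOf_eq] at hc
            omega
          · have h1 : (φ (r, mu r - 1)).1 = i := hri
            have h2 : (φ (r, mu r - 1)).2 = nu (ψ r) := (hφ' r hr).2.1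
            have h3 : (φ (r, mu r - 1)).2 = j := by
              rw [h2, hri, hj', hMn]
            exact Prod.ext h1 h3
    · intro h
      rw [hFi]
      have hle : M i ≤ M i + (if Inc lam b i then 1 else 0) := Nat.le_add_right _ _
      rcases h with ((h | h) | h) | h
      · have : j < M i := lt_of_lt_of_le h (le_max_left _ _)
        omega
      · have : j < M i := lt_of_lt_of_le h (le_max_right _ _)
        omega
      · obtain ⟨s, ⟨hsS, hsC⟩, hse⟩ := h
        obtain ⟨hr, hs2⟩ := (mem_Sset_iff hnu).mp hsS
        have hmu1 : 1 ≤ mu s.1 := by have := hr.1; omega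
        have hs2' : s.2 = mu s.1 - 1 := by omega
        have hlr : lam s.1 < mu s.1 := by
          have hc : ¬ (s.2 < lam s.1) := hsC
          omega
        have hsfull : s = (s.1, mu s.1 - 1) := by
          rw [← hs2']
        have hψs : ψ s.1 = i := by
          show (φ (s.1, mu s.1 - 1)).1 = i
          rw [← hsfull, hse]
        have hInd : Inc lam b i := by
          rw [hIncdef]
          exact Or.inr ⟨s.1, hr, hlr, hψs⟩
        have hTi : Trow mu nu i := hIncT lam b i hInd
        have hMn : M i = nu i := max_eq_right hTi.1
        have hjx : j = nu i := by
          have h2 : (φ s).2 = nu (ψ s.1) := by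
            rw [hsfull]; exact (hφ' s.1 hr).2.1
          rw [hse, hψs] at h2
          exact h2
        rw [if_pos hInd, hjx, hMn]
        omega
      · rcases b with _ | _
        · simp at h
        · simp only [if_true, Set.mem_singleton_iff, Prod.ext_iff] at h
          obtain ⟨hit, hjt⟩ := h
          have hInd : Inc lam true i := by
            rw [hIncdef]; left; exact ⟨rfl, hit⟩
          have hTi : Trow mu nu i := hIncT lam true i hInd
          have hMn : M i = nu i := max_eq_right hTi.1
          rw [if_pos hInd]
          have hj : j = nu i := by rw [hjt, ht0r.2, ← hit]
          omega
  
  -- F always lands in the codomain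
  have hFfacts : ∀ lam b, HStrip mu (F (lam,b)) ∧ VStrip nu (F (lam,b)) ∧
      IsPartition (F (lam,b)) := by
    intro lam b
    have hH : HStrip mu (F (lam,b)) := by
      intro i
      constructor
      · exact le_trans (le_max_left _ _) (Nat.le_add_right _ _)
      · rw [hFi]
        by_cases h : Inc lam b (i+1)
        · have hT := hIncT _ _ _ h
          have h2 := hT.2 i (Nat.lt_succ_self i)
          have h3 : M (i+1) = nu (i+1) := max_eq_right hT.1
          rw [if_pos h, h3]
          omega
        · rw [if_neg h]
          have : M (i+1) ≤ mu i := max_le (hmu.1 i) (hE1 i)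
          omega
    have hV : VStrip nu (F (lam,b)) := by
      intro i
      refine ⟨le_trans (le_max_right _ _) (Nat.le_add_right _ _), ?_⟩
      rw [hFi]
      by_cases h : Inc lam b i
      · have hT := hIncT _ _ _ h
        have h3 : M i = nu i := max_eq_right hT.1
        rw [if_pos h, h3]
      · rw [if_neg h]
        have : M i ≤ nu i + 1 := max_le (hE2 i) (Nat.le_succ _)
        omega
    refine ⟨hH, hV, ?_, ?_⟩
    · intro i
      exact le_trans (hH i).2 (le_trans (le_max_left _ _) (Nat.le_add_right _ _))
    · obtain ⟨N1, hN1⟩ := hmu.2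
      obtain ⟨N2, hN2⟩ := hnu.2
      refine ⟨N1 + N2 + 1, fun i hi => ?_⟩
      have hm : mu i = 0 := hN1 i (by omega)
      have hn : nu i = 0 := hN2 i (by omega)
      have hnInc : ¬ Inc lam b i := by
        intro h
        have hT := hIncT _ _ _ h
        have h1 := hT.2 (i-1) (by omega)
        have h2 : mu (i-1) = 0 := hN1 (i-1) (by omega)
        omega
      rw [hFi, if_neg hnInc]
      have : M i = max (mu i) (nu i) := rfl
      omega
  constructor
  · -- part 1
    intro lam hlp hlv hlh b
    have hc := hcells lam b (fun i => (hlv i).1)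
    constructor
    · refine ⟨F (lam, b), ⟨(hFfacts lam b).2.2, hc⟩, ?_⟩
      rintro kap ⟨hkp, hkc⟩
      exact cells_inj (by rw [hkc, ← hc])
    · intro kap hkp hkc
      have he : kap = F (lam, b) := cells_inj (by rw [hkc, ← hc])
      rw [he]
      exact ⟨(hFfacts lam b).1, (hFfacts lam b).2.1⟩
  · -- part 2
    refine ⟨F, fun lam b hlp hlv hlh => hcells lam b (fun i => (hlv i).1), ?_, ?_, ?_⟩
    · -- MapsTo
      rintro ⟨lam, b⟩ ⟨hlp, hlv, hlh⟩
      exact ⟨(hFfacts lam b).2.2, (hFfacts lam b).1, (hFfacts lam b).2.1⟩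
    · -- InjOn
      rintro ⟨lam, b⟩ ⟨hlp, hlv, hlh⟩ ⟨lam', b'⟩ ⟨hlp', hlv', hlh'⟩ heq
      have hiff : ∀ i, Inc lam b i ↔ Inc lam' b' i := by
        intro i
        have h1 : M i + (if Inc lam b i then 1 else 0) =
            M i + (if Inc lam' b' i then 1 else 0) := by
          have := congrFun heq i
          rw [hFi, hFi] at this
          exact this
        by_cases h : Inc lam b i <;> by_cases h' : Inc lam' b' i
        · exact iff_of_true h h'
        · rw [if_pos h, if_neg h'] at h1; omega
        · rw [if_neg h, if_pos h'] at h1; omega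
        · exact iff_of_false h h'
      have ht0iff : ∀ (l : ℕ → ℕ) (bb : Bool), Inc l bb t0.1 ↔ bb = true := by
        intro l bb
        rw [hIncdef]
        constructor
        · rintro (⟨hb, _⟩ | ⟨r, hr, _, hre⟩)
          · exact hb
          · exact absurd hre (hψne r hr)
        · intro hb; exact Or.inl ⟨hb, rfl⟩
      have hb : b = b' := by
        have h1 := ((ht0iff lam b).symm.trans ((hiff t0.1).trans (ht0iff lam' b')))
        rcases b <;> rcases b' <;> simp_all
      have hψiff : ∀ (l : ℕ → ℕ) (bb : Bool) i, Srow mu nu i →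
          (l i < mu i ↔ Inc l bb (ψ i)) := by
        intro l bb i hSi
        rw [hIncdef]
        constructor
        · intro h; exact Or.inr ⟨i, hSi, h, rfl⟩
        · rintro (⟨_, he⟩ | ⟨r, hr, hlr, hre⟩)
          · exact absurd he (hψne i hSi)
          · have := hψinj r i hr hSi hre
            subst this
            exact hlr
      have hlam : lam = lam' := by
        funext i
        by_cases hSi : Srow mu nu i
        · have k1 := hψiff lam b i hSi
          have k2 := hψiff lam' b' i hSi
          have h3 : lam i < mu i ↔ lam' i < mu i :=
            k1.trans ((hiff (ψ i)).trans k2.symm)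
          have h4 : lam i ≤ mu i := (hlv i).1
          have h5 : mu i ≤ lam i + 1 := (hlv i).2
          have h6 : lam' i ≤ mu i := (hlv' i).1
          have h7 : mu i ≤ lam' i + 1 := (hlv' i).2
          omega
        · rw [Srow] at hSi
          push_neg at hSi
          have forced : ∀ (l : ℕ → ℕ), VStrip l mu → HStrip l nu →
              l i = min (mu i) (nu i) := by
            intro l hv hh
            have h1 := (hv i).1
            have h2 := (hv i).2
            have h3 := (hh i).1
            have h4 := (hh i).2
            have h6 := hE2 i
            rcases Nat.lt_or_ge (nu (i+1)) (mu i) with hc | hc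
            · have h7 := hSi hc
              have h8 : min (mu i) (nu i) = nu i := min_eq_right (by omega)
              omega
            · have h8 : min (mu i) (nu i) = mu i := min_eq_left (by
                have := hnu.1 i
                omega)
              omega
          rw [forced lam hlv hlh, forced lam' hlv' hlh']
      rw [Prod.ext_iff]
      exact ⟨hlam, hb⟩
    · -- SurjOn
      rintro kap ⟨hkp, hkh, hkv⟩
      have hkA : Antitone kap := antitone_nat_of_succ_le hkp.1
      have hbound : ∀ i, M i ≤ kap i ∧ kap i ≤ M i + 1 := by
        intro i
        have h1 := (hkh i).1
        have h2 := (hkv i).1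
        have h3 := (hkv i).2
        refine ⟨max_le h1 h2, ?_⟩
        have h4 : nu i ≤ M i := le_max_right _ _
        omega
      set J : ℕ → Prop := fun i => kap i = M i + 1 with hJdef
      have hJT : ∀ i, J i → Trow mu nu i := by
        intro i hJi
        have hJi' : kap i = M i + 1 := hJi
        have h0 : M i = max (mu i) (nu i) := rfl
        have h3 := (hkv i).2
        have h4 : nu i ≤ M i := le_max_right _ _
        have hMn : M i = nu i := by omega
        have hA : mu i ≤ nu i := by
          have := le_max_left (mu i) (nu i)
          omega
        refine ⟨hA, fun m hm => ?_⟩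
        have h5 : kap i ≤ kap (m+1) := hkA (by omega)
        have h6 : kap (m+1) ≤ mu m := (hkh m).2
        omega
      set lam : ℕ → ℕ :=
        fun i => if Srow mu nu i ∧ J (ψ i) then mu i - 1 else min (mu i) (nu i) with hlamdef
      set b : Bool := if J t0.1 then true else false with hbdef
      have hlami : ∀ i, lam i = if Srow mu nu i ∧ J (ψ i) then mu i - 1
          else min (mu i) (nu i) := fun i => rfl
      have hlml : ∀ i, lam i ≤ mu i := by
        intro i
        rw [hlami]
        split
        · omega
        · exact min_le_left _ _
      have hlge : ∀ i, nu (i+1) ≤ lam i := by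
        intro i
        rw [hlami]
        split
        · next h => have := h.1.1; omega
        · exact le_min (hE1 i) (hnu.1 i)
      have hlle : ∀ i, lam i ≤ nu i := by
        intro i
        rw [hlami]
        split
        · next h => have := h.1.2; omega
        · exact min_le_right _ _
      have hlgm : ∀ i, mu i ≤ lam i + 1 := by
        intro i
        rw [hlami]
        split
        · next h => have := h.1.1; omega
        · have := hE2 i
          rcases Nat.le_total (mu i) (nu i) with h | h
          · rw [min_eq_left h]; omega
          · rw [min_eq_right h]; omega
      have hlp : IsPartition lam := by
        constructor
        · intro i
          exact le_trans (hlle (i+1)) (hlge i)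
        · obtain ⟨N1, hN1⟩ := hmu.2
          exact ⟨N1, fun i hi => by have := hlml i; have := hN1 i hi; omega⟩
      have hlv : VStrip lam mu := fun i => ⟨hlml i, hlgm i⟩
      have hlh : HStrip lam nu := fun i => ⟨hlle i, hlge i⟩
      have hIncJ : ∀ i, Inc lam b i ↔ J i := by
        intro i
        constructor
        · intro h
          rw [hIncdef] at h
          rcases h with ⟨hb, rfl⟩ | ⟨r, hr, hlr, rfl⟩
          · rw [hbdef] at hb
            by_contra hJ0
            rw [if_neg hJ0] at hb
            exact Bool.false_ne_true hb
          · by_contra hJ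
            have h1 : lam r = min (mu r) (nu r) := by
              rw [hlami, if_neg (by tauto)]
            have h2 : min (mu r) (nu r) = mu r := min_eq_left hr.2
            omega
        · intro hJi
          rw [hIncdef]
          by_cases hit : i = t0.1
          · left
            refine ⟨?_, hit⟩
            rw [hbdef, if_pos (hit ▸ hJi)]
          · have hTi := hJT i hJi
            have hlt : t0.1 < i := lt_of_le_of_ne (ht0m i hTi) (Ne.symm hit)
            obtain ⟨r, hrj, hrS, hno⟩ := exists_srow_below hmu hnu ht0r.1 hTi hlt
            have hψr : ψ r = i := by
              have h1 := (hφ' r hrS).2.2.2 i hTi hrj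
              have h2 := (hφ' r hrS).2.2.1
              have h3 := (hφ' r hrS).1
              by_contra hne
              exact hno (ψ r) h2 (by omega) h3
            refine Or.inr ⟨r, hrS, ?_, hψr⟩
            have h4 : lam r = mu r - 1 := by
              rw [hlami, if_pos ⟨hrS, hψr ▸ hJi⟩]
            have := hrS.1
            omega
      refine ⟨(lam, b), ⟨hlp, hlv, hlh⟩, ?_⟩
      funext i
      rw [hFi]
      by_cases h : Inc lam b i
      · rw [if_pos h]
        have hj := (hIncJ i).mp h
        rw [hJdef] at hj
        omega
      · rw [if_neg h]
        have h2 : ¬ J i := fun hj => h ((hIncJ i).mpr hj)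
        rw [hJdef] at h2
        have := hbound i
        omega
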